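/- Let V ⊆ F_2^{65} be a spanning binary linear code of dimension 13 with all nonzero weights in {24, 32, 40, 56}. Then a_{56} = (a_2^* − a_3^* − 5)/2, where a_{56} is the number of weight-56 words of V and a_i^* the number of weight-i words of the dual code; in particular a_2^* > 0. -/

import Mathlib

open Finset

/-- Hamming weight of a word over `ZMod 2`. -/
def wt {ι : Type*} [Fintype ι] (v : ι → ZMod 2) : ℕ :=
  (Finset.univ.filter fun i => v i ≠ 0).card

/-- The dual code: annihilator under the standard scalar product. -/
def dualCode {n : ℕ} (V : Submodule (ZMod 2) (Fin n → ZMod 2)) :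
    Submodule (ZMod 2) (Fin n → ZMod 2) where
  carrier := {w | ∀ v ∈ V, ∑ i, v i * w i = 0}
  add_mem' := by
    intro a b ha hb v hv
    simp only [Pi.add_apply, mul_add, Finset.sum_add_distrib, ha v hv, hb v hv, add_zero]
  zero_mem' := by intro v hv; simp
  smul_mem' := by
    intro c a ha v hv
    have h := ha v hv
    calc ∑ i, v i * (c • a) i = c * ∑ i, v i * a i := by
          simp [Finset.mul_sum, mul_left_comm]
      _ = 0 := by rw [h, mul_zero]

/-- A code is spanning if the union of supports of its words is everything. -/
def Spanning {n : ℕ} (V : Submodule (ZMod 2) (Fin n → ZMod 2)) : Prop :=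
  ∀ i : Fin n, ∃ v ∈ V, v i ≠ 0

/-!
For a binary code `C` of length `n` put `s(v) = ∑ᵢ (-1)^{vᵢ} = n - 2 wt v`. Expanding `s(v)^k` as
a sum over `k`-tuples of coordinates and using orthogonality of characters on `C`,
`∑_{v ∈ C} s(v)^k = |C| · #{(i₁, …, i_k) | e_{i₁} + ⋯ + e_{i_k} ∈ C^⊥}`.
The injective such tuples are the orderings of the supports of weight-`k` dual words. Hence the
count is `1`, `0`, `n + 2 a₂^*`, `6 a₃^*` for `k = 0, 1, 2, 3`: spanning rules out `1`-tuples and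
repeated indices in `3`-tuples, while the `2`-tuples `(i, i)` contribute `n`. Grouping the left
side by weight gives four linear equations in `a₂₄, a₃₂, a₄₀, a₅₆, a₂^*, a₃^*`; eliminating
`a₂₄, a₃₂, a₄₀` leaves the relation, and then `a₂^* ≥ 5`.
-/

variable {n : ℕ}

lemma AddChar.map_sum_eq_prod {ι A M : Type*} [AddCommMonoid A] [CommMonoid M]
    (ψ : AddChar A M) (s : Finset ι) (f : ι → A) :
    ψ (∑ i ∈ s, f i) = ∏ i ∈ s, ψ (f i) := by
  classical
  induction s using Finset.induction_on with
  | empty => simp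
  | insert a s ha ih => rw [sum_insert ha, prod_insert ha, AddChar.map_add_eq_mul, ih]

noncomputable def signChar : AddChar (ZMod 2) ℤ :=
  AddChar.zmodChar 2 (by norm_num : (-1 : ℤ) ^ 2 = 1)

lemma signChar_apply (x : ZMod 2) : signChar x = if x = 0 then 1 else -1 := by
  rw [signChar, AddChar.zmodChar_apply]
  fin_cases x <;> rfl

lemma signChar_eq_one_iff {x : ZMod 2} : signChar x = 1 ↔ x = 0 := by
  rw [signChar_apply]; split_ifs <;> simp_all

open Classical in
lemma sum_signChar_comp {G : Type*} [AddCommGroup G] [Fintype G] (f : G →+ ZMod 2) :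
    ∑ x, signChar (f x) = if ∀ x, f x = 0 then (Fintype.card G : ℤ) else 0 := by
  simpa only [AddChar.compAddMonoidHom_apply, AddChar.eq_zero_iff, signChar_eq_one_iff]
    using AddChar.sum_eq_ite (signChar.compAddMonoidHom f)

lemma sum_signChar_eq_sub_two_mul_wt (v : Fin n → ZMod 2) :
    ∑ i, signChar (v i) = n - 2 * (wt v : ℤ) := by
  have hsplit := card_filter_add_card_filter_not (s := univ) (fun i => v i ≠ 0)
  simp only [signChar_apply, sum_ite, sum_const, card_univ, Fintype.card_fin] at hsplit ⊢
  simp only [wt, ← hsplit, ne_eq, not_not]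
  push_cast
  ring

open Classical in
noncomputable def dualTuples (C : Submodule (ZMod 2) (Fin n → ZMod 2)) (k : ℕ) :
    Finset (Fin k → Fin n) :=
  {p | ∀ v ∈ C, ∑ j, v (p j) = 0}

lemma sum_pow_sum_signChar (C : Submodule (ZMod 2) (Fin n → ZMod 2)) [Fintype C] (k : ℕ) :
    ∑ v : C, (∑ i, signChar ((v : Fin n → ZMod 2) i)) ^ k
      = Fintype.card C * #(dualTuples C k) := by
  classical
  let eval (p : Fin k → Fin n) : C →+ ZMod 2 :=
    { toFun := fun v => ∑ j, (v : Fin n → ZMod 2) (p j)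
      map_zero' := by simp
      map_add' := fun v w => by simp [sum_add_distrib] }
  calc ∑ v : C, (∑ i, signChar ((v : Fin n → ZMod 2) i)) ^ k
      = ∑ p : Fin k → Fin n, ∑ v : C, signChar (eval p v) := by
        rw [sum_comm]
        refine sum_congr rfl fun v _ => ?_
        rw [Fintype.sum_pow]
        exact sum_congr rfl fun p _ => (signChar.map_sum_eq_prod _ _).symm
    _ = Fintype.card C * #(dualTuples C k) := by
        rw [dualTuples, sum_congr rfl fun p _ => sum_signChar_comp (eval p), ← sum_filter,
          sum_const, nsmul_eq_mul, mul_comm]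
        simp [eval]

noncomputable def weightCount (C : Submodule (ZMod 2) (Fin n → ZMod 2)) (m : ℕ) : ℕ :=
  {v | v ∈ C ∧ wt v = m}.ncard

lemma weightCount_eq_card (C : Submodule (ZMod 2) (Fin n → ZMod 2)) [Fintype C] (m : ℕ) :
    weightCount C m = #{v : C | wt (v : Fin n → ZMod 2) = m} := by
  rw [weightCount, ← Nat.card_coe_set_eq, ← Fintype.card_subtype, ← Nat.card_eq_fintype_card]
  exact Nat.card_congr (Equiv.subtypeSubtypeEquivSubtypeInter (· ∈ C) (wt · = m)).symm

lemma wt_eq_zero_iff {v : Fin n → ZMod 2} : wt v = 0 ↔ v = 0 := by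
  simp [wt, filter_eq_empty_iff, funext_iff]

lemma weightCount_zero (C : Submodule (ZMod 2) (Fin n → ZMod 2)) : weightCount C 0 = 1 := by
  have hzero : {v | v ∈ C ∧ wt v = 0} = {0} := Set.ext fun v =>
    ⟨fun h => wt_eq_zero_iff.1 h.2, by rintro rfl; exact ⟨C.zero_mem, wt_eq_zero_iff.2 rfl⟩⟩
  rw [weightCount, hzero, Set.ncard_singleton]

lemma sum_comp_wt_eq_sum_weightCount (C : Submodule (ZMod 2) (Fin n → ZMod 2)) [Fintype C]
    {T : Finset ℕ} (hT : ∀ v ∈ C, wt v ∈ T) (g : ℕ → ℤ) :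
    ∑ v : C, g (wt (v : Fin n → ZMod 2)) = ∑ m ∈ T, weightCount C m * g m := by
  rw [← sum_fiberwise_of_maps_to fun (v : C) _ => hT v v.2]
  refine sum_congr rfl fun m _ => ?_
  rw [weightCount_eq_card, sum_congr rfl fun v hv => by rw [(mem_filter.mp hv).2], sum_const,
    nsmul_eq_mul]

theorem sum_weightCount_mul_pow (C : Submodule (ZMod 2) (Fin n → ZMod 2)) {T : Finset ℕ}
    (hT : ∀ v ∈ C, wt v ∈ T) (k : ℕ) :
    ∑ m ∈ T, (weightCount C m : ℤ) * (n - 2 * m) ^ k = Nat.card C * #(dualTuples C k) := by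
  classical
  rw [← sum_comp_wt_eq_sum_weightCount C hT, Nat.card_eq_fintype_card, ← sum_pow_sum_signChar]
  simp only [sum_signChar_eq_sub_two_mul_wt]

lemma card_filter_image_eq_factorial {α : Type*} [Fintype α] [DecidableEq α] {k : ℕ}
    {S : Finset α} (hS : #S = k) :
    #{p : Fin k → α | univ.image p = S} = k.factorial := by
  let e : {p : Fin k → α // univ.image p = S} ≃ (Fin k ≃ S) :=
    { toFun := fun p =>
        Equiv.ofBijective (fun j => ⟨p.1 j, p.2.le (mem_image_of_mem _ (mem_univ j))⟩)
        ((Fintype.bijective_iff_surjective_and_card _).2 ⟨fun ⟨t, ht⟩ => by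
          rw [← p.2] at ht
          obtain ⟨j, -, rfl⟩ := mem_image.1 ht
          exact ⟨j, rfl⟩, by simp [hS]⟩)
      invFun := fun e => ⟨fun j => e j, by
        ext t
        refine ⟨fun ht => ?_, fun ht =>
          mem_image.2 ⟨e.symm ⟨t, ht⟩, mem_univ _, by simp⟩⟩
        obtain ⟨j, -, rfl⟩ := mem_image.1 ht
        exact (e j).2⟩
      left_inv := fun p => rfl
      right_inv := fun e => by ext; rfl }
  rw [← Fintype.card_subtype, Fintype.card_congr e,
    Fintype.card_equiv (S.equivFinOfCardEq hS).symm, Fintype.card_fin]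

def indicatorWord (s : Finset (Fin n)) : Fin n → ZMod 2 := fun t => if t ∈ s then 1 else 0

lemma support_indicatorWord (s : Finset (Fin n)) :
    ({t | indicatorWord s t ≠ 0} : Finset (Fin n)) = s := by
  ext t; simp [indicatorWord]

lemma indicatorWord_support (w : Fin n → ZMod 2) : indicatorWord {t | w t ≠ 0} = w := by
  funext t
  simp only [indicatorWord, mem_filter, mem_univ, true_and]
  generalize w t = x
  fin_cases x <;> rfl

lemma sum_mul_indicatorWord (v : Fin n → ZMod 2) (s : Finset (Fin n)) :
    ∑ t, v t * indicatorWord s t = ∑ t ∈ s, v t := by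
  simp [indicatorWord, mul_ite]

lemma card_filter_injective_dualTuples (C : Submodule (ZMod 2) (Fin n → ZMod 2)) (k : ℕ) :
    #{p ∈ dualTuples C k | Function.Injective p} = k.factorial * weightCount (dualCode C) k := by
  classical
  have sum_image_eq (p : Fin k → Fin n) (hp : Function.Injective p) (v : Fin n → ZMod 2) :
      ∑ j, v (p j) = ∑ t, v t * indicatorWord (univ.image p) t := by
    rw [sum_mul_indicatorWord, sum_image hp.injOn]
  have hmaps : ∀ p ∈ {p ∈ dualTuples C k | Function.Injective p},
      indicatorWord (univ.image p) ∈ {w | w ∈ dualCode C ∧ wt w = k}.toFinset := by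
    intro p hp
    simp only [dualTuples, mem_filter, mem_univ, true_and] at hp
    obtain ⟨hdual, hinj⟩ := hp
    simp only [Set.mem_toFinset, Set.mem_ofPred_eq]
    refine ⟨fun v hv => ?_, ?_⟩
    · rw [← sum_image_eq p hinj]; exact hdual v hv
    · rw [wt, support_indicatorWord, card_image_of_injective _ hinj, card_univ, Fintype.card_fin]
  have fiber (w) (hw : w ∈ {w | w ∈ dualCode C ∧ wt w = k}.toFinset) :
      {p ∈ {p ∈ dualTuples C k | Function.Injective p} | indicatorWord (univ.image p) = w}
        = ({p | univ.image p = ({t | w t ≠ 0} : Finset (Fin n))} : Finset (Fin k → Fin n)) := by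
    simp only [Set.mem_toFinset, Set.mem_ofPred_eq] at hw
    obtain ⟨hdual, hwt⟩ := hw
    ext p
    simp only [dualTuples, mem_filter, mem_univ, true_and]
    constructor
    · rintro ⟨-, rfl⟩
      rw [support_indicatorWord]
    · intro himage
      have hinj : Function.Injective p := by
        rw [← Set.injOn_univ, ← coe_univ, ← card_image_iff, himage, card_univ,
          Fintype.card_fin]
        exact hwt
      refine ⟨⟨fun v hv => ?_, hinj⟩, by rw [himage, indicatorWord_support]⟩
      rw [sum_image_eq p hinj, himage, indicatorWord_support]
      exact hdual v hv
  rw [card_eq_sum_card_fiberwise hmaps, weightCount, Set.ncard_eq_toFinset_card',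
    sum_congr rfl fun w hw => by
      rw [fiber w hw, card_filter_image_eq_factorial (Set.mem_toFinset.1 hw).2],
    sum_const, smul_eq_mul, mul_comm]

lemma card_dualTuples_zero (C : Submodule (ZMod 2) (Fin n → ZMod 2)) :
    #(dualTuples C 0) = 1 := by
  simp [dualTuples]

lemma dualTuples_one_eq_empty {C : Submodule (ZMod 2) (Fin n → ZMod 2)} (hC : Spanning C) :
    dualTuples C 1 = ∅ := by
  refine eq_empty_of_forall_notMem fun p hp => ?_
  obtain ⟨v, hv, hne⟩ := hC (p 0)
  simp only [dualTuples, mem_filter, mem_univ, true_and, Fin.sum_univ_one] at hp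
  exact hne (hp v hv)

lemma card_dualTuples_two (C : Submodule (ZMod 2) (Fin n → ZMod 2)) :
    #(dualTuples C 2) = n + 2 * weightCount (dualCode C) 2 := by
  classical
  have hdiag :
      {p ∈ dualTuples C 2 | ¬Function.Injective p} = univ.image (Function.const (Fin 2)) := by
    ext p
    simp only [dualTuples, mem_filter, mem_univ, true_and, mem_image, Fin.sum_univ_two]
    constructor
    · rintro ⟨-, hp⟩
      have h01 : p 0 = p 1 := by
        by_contra h
        exact hp fun i j hij => by fin_cases i <;> fin_cases j <;> simp_all [eq_comm]
      exact ⟨p 0, funext fun j => by fin_cases j <;> simp [h01]⟩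
    · rintro ⟨i, rfl⟩
      exact ⟨fun v _ => CharTwo.add_self_eq_zero _, fun h => zero_ne_one (h rfl)⟩
  rw [← card_filter_add_card_filter_not (s := dualTuples C 2) Function.Injective,
    card_filter_injective_dualTuples, hdiag, card_image_of_injective _ Function.const_injective,
    card_univ, Fintype.card_fin, Nat.factorial_two]
  ring

lemma injective_of_mem_dualTuples_three {C : Submodule (ZMod 2) (Fin n → ZMod 2)}
    (hC : Spanning C) {p : Fin 3 → Fin n} (hp : p ∈ dualTuples C 3) : Function.Injective p := by
  simp only [dualTuples, mem_filter, mem_univ, true_and, Fin.sum_univ_three] at hp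
  have ne_of_sum (a b c : Fin n) (h : ∀ v ∈ C, v a + v b + v c = 0) : a ≠ b := by
    rintro rfl
    obtain ⟨v, hv, hne⟩ := hC c
    exact hne (by simpa [CharTwo.add_self_eq_zero] using h v hv)
  have h01 := ne_of_sum _ _ _ hp
  have h02 := ne_of_sum (p 0) (p 2) (p 1) fun v hv => by rw [← hp v hv]; ring
  have h12 := ne_of_sum (p 1) (p 2) (p 0) fun v hv => by rw [← hp v hv]; ring
  intro i j hij
  fin_cases i <;> fin_cases j <;> simp_all [eq_comm]

lemma card_dualTuples_three {C : Submodule (ZMod 2) (Fin n → ZMod 2)} (hC : Spanning C) :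
    #(dualTuples C 3) = 6 * weightCount (dualCode C) 3 := by
  rw [← filter_true_of_mem fun p => injective_of_mem_dualTuples_three hC (p := p),
    card_filter_injective_dualTuples]
  rfl

theorem stmt18 (V : Submodule (ZMod 2) (Fin 65 → ZMod 2))
    (hspan : Spanning V) (hd : Module.finrank (ZMod 2) V = 13)
    (hwt : ∀ v ∈ V, v ≠ 0 → wt v = 24 ∨ wt v = 32 ∨ wt v = 40 ∨ wt v = 56) :
    2 * ({v | v ∈ V ∧ wt v = 56}.ncard : ℤ) =
        ({w | w ∈ dualCode V ∧ wt w = 2}.ncard : ℤ)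
          - ({w | w ∈ dualCode V ∧ wt w = 3}.ncard : ℤ) - 5 ∧
    0 < {w | w ∈ dualCode V ∧ wt w = 2}.ncard := by
  have hweights : ∀ v ∈ V, wt v ∈ ({0, 24, 32, 40, 56} : Finset ℕ) := by
    intro v hv
    by_cases h0 : v = 0
    · simp [wt_eq_zero_iff.2 h0]
    · rcases hwt v hv h0 with h | h | h | h <;> simp [h]
  have moment (k : ℕ) :
      ∑ m ∈ ({0, 24, 32, 40, 56} : Finset ℕ), (weightCount V m : ℤ) * (65 - 2 * m) ^ k
        = 2 ^ 13 * #(dualTuples V k) := by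
    have h := sum_weightCount_mul_pow V hweights k
    rw [Module.natCard_eq_pow_finrank (K := ZMod 2), hd, Nat.card_zmod] at h
    exact_mod_cast h
  have e0 := card_dualTuples_zero V ▸ moment 0
  have e1 := dualTuples_one_eq_empty hspan ▸ moment 1
  have e2 := card_dualTuples_two V ▸ moment 2
  have e3 := card_dualTuples_three hspan ▸ moment 3
  norm_num [sum_insert, weightCount_zero] at e0 e1 e2 e3
  change 2 * (weightCount V 56 : ℤ) = weightCount (dualCode V) 2 - weightCount (dualCode V) 3 - 5
    ∧ 0 < weightCount (dualCode V) 2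
  have key : 2 * (weightCount V 56 : ℤ)
      = weightCount (dualCode V) 2 - weightCount (dualCode V) 3 - 5 := by linarith
  exact ⟨key, by omega⟩
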